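/- arXiv:2303.10640 — 5 statements merged into one kernel-verified Lean document; each statement's English description precedes it below -/
import Mathlib

section
/- Let K and J be finite types, let π : K → J be a surjective map, and let a, b : K → ℝ be strictly positive functions. Then Σ_{j ∈ J} Φ( Σ_{k : π(k) = j} a(k), Σ_{k : π(k) = j} b(k) ) ≤ Σ_{k ∈ K} Φ(a(k), b(k)), where Φ(u,v) = (u − v)(log u − log v). -/
open Finset

/-- Pointwise: `x - y ≤ x * (log x - log y)` for positive `x, y`. -/
lemma sub_le_mul_log_sub {x y : ℝ} (hx : 0 < x) (hy : 0 < y) :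
    x - y ≤ x * (Real.log x - Real.log y) := by
  have h := Real.log_le_sub_one_of_pos (div_pos hy hx)
  have hlog : Real.log (y / x) = Real.log y - Real.log x := Real.log_div hy.ne' hx.ne'
  rw [hlog] at h
  have h2 := mul_le_mul_of_nonneg_left h hx.le
  have h3 : x * (y / x - 1) = y - x := by field_simp
  nlinarith

/-- Log-sum inequality over a finset. -/
lemma log_sum_ineq {K : Type*} (s : Finset K) (a b : K → ℝ)
    (ha : ∀ k ∈ s, 0 < a k) (hb : ∀ k ∈ s, 0 < b k) (hs : s.Nonempty) :
    (∑ k ∈ s, a k) * (Real.log (∑ k ∈ s, a k) - Real.log (∑ k ∈ s, b k)) ≤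
      ∑ k ∈ s, a k * (Real.log (a k) - Real.log (b k)) := by
  set A := ∑ k ∈ s, a k with hA
  set B := ∑ k ∈ s, b k with hB
  have hApos : 0 < A := Finset.sum_pos ha hs
  have hBpos : 0 < B := Finset.sum_pos hb hs
  -- a k * (log (a k) - log (b k)) - a k * (log A - log B)
  --   = a k * (log (a k) - log (b k * A / B)) ≥ a k - b k * A / B
  have key : ∀ k ∈ s, a k * (Real.log A - Real.log B) + (a k - b k * (A / B))
      ≤ a k * (Real.log (a k) - Real.log (b k)) := by
    intro k hk
    have hak := ha k hk
    have hbk := hb k hk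
    have hy : 0 < b k * (A / B) := mul_pos hbk (div_pos hApos hBpos)
    have h1 : a k - b k * (A / B) ≤ a k * (Real.log (a k) - Real.log (b k * (A / B))) :=
      sub_le_mul_log_sub hak hy
    have h2 : Real.log (b k * (A / B)) = Real.log (b k) + (Real.log A - Real.log B) := by
      rw [Real.log_mul hbk.ne' (div_pos hApos hBpos).ne',
        Real.log_div hApos.ne' hBpos.ne']
    rw [h2] at h1
    nlinarith
  have hsum := Finset.sum_le_sum key
  rw [Finset.sum_add_distrib, ← Finset.sum_mul, Finset.sum_sub_distrib,
    ← Finset.sum_mul] at hsum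
  have : B * (A / B) = A := mul_div_cancel₀ A hBpos.ne'
  rw [← hA, ← hB] at hsum
  nlinarith [hsum]

/-- Φ is subadditive over sums on a nonempty finset. -/
lemma Phi_sum_le {K : Type*} (s : Finset K) (a b : K → ℝ)
    (ha : ∀ k ∈ s, 0 < a k) (hb : ∀ k ∈ s, 0 < b k) (hs : s.Nonempty) :
    ((∑ k ∈ s, a k) - (∑ k ∈ s, b k)) *
      (Real.log (∑ k ∈ s, a k) - Real.log (∑ k ∈ s, b k)) ≤
      ∑ k ∈ s, (a k - b k) * (Real.log (a k) - Real.log (b k)) := by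
  have h1 := log_sum_ineq s a b ha hb hs
  have h2 := log_sum_ineq s b a hb ha hs
  have heq : ∀ k ∈ s, (a k - b k) * (Real.log (a k) - Real.log (b k))
      = a k * (Real.log (a k) - Real.log (b k))
        + b k * (Real.log (b k) - Real.log (a k)) := by intro k _; ring
  rw [Finset.sum_congr rfl heq, Finset.sum_add_distrib]
  nlinarith [h1, h2]

/-- Monotonicity of `Φ(u,v) = (u − v)(log u − log v)` under marginalization:
summing the positive weights `a`, `b` over the fibers of a surjection `π : K → J`
decreases the total `Φ`-value. -/
theorem Phi_marginalization {K J : Type*} [Fintype K] [Fintype J] [DecidableEq J]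
    (π : K → J) (hπ : Function.Surjective π)
    (a b : K → ℝ) (ha : ∀ k, 0 < a k) (hb : ∀ k, 0 < b k) :
    ∑ j : J,
      ((∑ k ∈ Finset.univ.filter fun k => π k = j, a k) -
        (∑ k ∈ Finset.univ.filter fun k => π k = j, b k)) *
      (Real.log (∑ k ∈ Finset.univ.filter fun k => π k = j, a k) -
        Real.log (∑ k ∈ Finset.univ.filter fun k => π k = j, b k)) ≤
    ∑ k : K, (a k - b k) * (Real.log (a k) - Real.log (b k)) := by
  have hfib : ∀ j : J, (Finset.univ.filter fun k => π k = j).Nonempty := by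
    intro j
    obtain ⟨k, hk⟩ := hπ j
    exact ⟨k, by simp [hk]⟩
  calc ∑ j : J,
      ((∑ k ∈ Finset.univ.filter fun k => π k = j, a k) -
        (∑ k ∈ Finset.univ.filter fun k => π k = j, b k)) *
      (Real.log (∑ k ∈ Finset.univ.filter fun k => π k = j, a k) -
        Real.log (∑ k ∈ Finset.univ.filter fun k => π k = j, b k))
      ≤ ∑ j : J, ∑ k ∈ Finset.univ.filter fun k => π k = j,
          (a k - b k) * (Real.log (a k) - Real.log (b k)) := by
        refine Finset.sum_le_sum fun j _ => ?_
        exact Phi_sum_le _ a b (fun k _ => ha k) (fun k _ => hb k) (hfib j)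
    _ = ∑ k : K, (a k - b k) * (Real.log (a k) - Real.log (b k)) :=
        Finset.sum_fiberwise _ _ _
end

section
/- Let I be a nonempty finite type and u, v : I → ℝ strictly positive functions. Then ( Σ_{i ∈ I} |u(i) − v(i)| )² ≤ ( Σ_{i ∈ I} max(u(i), v(i)) ) · ( Σ_{i ∈ I} (u(i) − v(i))(log u(i) − log v(i)) ). -/
/-!
Pointwise, `1 - y/x ≤ log (x/y)` for `0 < y ≤ x` gives `(x - y)² ≤ max x y · (x - y)(log x - log y)`.
Summing these bounds through the Cauchy–Schwarz inequality
`(∑ rᵢ)² ≤ (∑ fᵢ)(∑ gᵢ)` for `rᵢ² ≤ fᵢ gᵢ` yields the theorem.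
-/

open Finset Real

lemma sub_le_mul_log_sub_log {x y : ℝ} (hy : 0 < y) (hyx : y ≤ x) :
    x - y ≤ x * (log x - log y) := by
  have hx : 0 < x := hy.trans_le hyx
  have h := one_sub_inv_le_log_of_pos (div_pos hx hy)
  rw [log_div hx.ne' hy.ne', inv_div] at h
  calc x - y = x * (1 - y / x) := by field_simp
    _ ≤ x * (log x - log y) := mul_le_mul_of_nonneg_left h hx.le

lemma sub_mul_log_sub_log_nonneg {x y : ℝ} (hx : 0 < x) (hy : 0 < y) :
    0 ≤ (x - y) * (log x - log y) := by
  rcases le_total y x with h | h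
  · exact mul_nonneg (sub_nonneg.2 h) (sub_nonneg.2 (log_le_log hy h))
  · exact mul_nonneg_of_nonpos_of_nonpos (sub_nonpos.2 h) (sub_nonpos.2 (log_le_log hx h))

lemma sq_sub_le_max_mul_sub_mul_log_sub_log {x y : ℝ} (hx : 0 < x) (hy : 0 < y) :
    (x - y) ^ 2 ≤ max x y * ((x - y) * (log x - log y)) := by
  wlog hyx : y ≤ x generalizing x y
  · have := this hy hx (le_of_not_ge hyx)
    rw [max_comm]
    linarith
  rw [max_eq_left hyx, sq, mul_left_comm]
  exact mul_le_mul_of_nonneg_left (sub_le_mul_log_sub_log hy hyx) (sub_nonneg.2 hyx)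

theorem pinsker_type_inequality_general {I : Type*} [Fintype I]
    (u v : I → ℝ) (hu : ∀ i, 0 < u i) (hv : ∀ i, 0 < v i) :
    (∑ i : I, |u i - v i|) ^ 2 ≤
      (∑ i : I, max (u i) (v i)) *
        ∑ i : I, (u i - v i) * (Real.log (u i) - Real.log (v i)) :=
  sum_sq_le_sum_mul_sum_of_sq_le_mul univ
    (fun i _ => (lt_max_of_lt_left (hu i)).le)
    (fun i _ => sub_mul_log_sub_log_nonneg (hu i) (hv i))
    (fun i _ => (sq_abs _).trans_le (sq_sub_le_max_mul_sub_mul_log_sub_log (hu i) (hv i)))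

/-- Pinsker-type inequality: for strictly positive `u, v : I → ℝ` on a nonempty
finite type, `(Σ |u − v|)² ≤ (Σ max(u,v)) · Σ (u − v)(log u − log v)`. -/
theorem pinsker_type_inequality {I : Type*} [Fintype I] [Nonempty I]
    (u v : I → ℝ) (hu : ∀ i, 0 < u i) (hv : ∀ i, 0 < v i) :
    (∑ i : I, |u i - v i|) ^ 2 ≤
      (∑ i : I, max (u i) (v i)) *
        ∑ i : I, (u i - v i) * (Real.log (u i) - Real.log (v i)) :=
  pinsker_type_inequality_general u v hu hv
end

section
/- Let d ≥ 1, q ≥ 2, Ω = {1,…,q}^{ℤ^d} with the Borel σ-algebra, and let ν be a probability measure on Ω with ν([η_{Λ_n}]) > 0 for all n and all η. For each x ∈ ℤ^d and each state j ∈ {1,…,q}, let c_x(·, j) : Ω → ℝ be a bounded measurable function with inf_{ω ∈ Ω, j} c_x(ω, j) ≥ δ for some δ > 0. Define Γ_n(x, j, η) = ∫_{[η_{Λ_n}]} c_x(ω, j) dν(ω) and α_n(x) = Σ_{η_{Λ_n}} Σ_{i ≠ η_x} Φ( Γ_n(x, η_x, η^{x,i}), Γ_n(x, i, η) ), where the outer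 sum runs over all configurations η_{Λ_n} on Λ_n. Then for every n ≥ 1 and every x ∈ Λ_n one has 0 ≤ α_n(x) ≤ α_{n+1}(x). -/
open MeasureTheory

/-- The centred box `Λ_n = ([-n,n] ∩ ℤ)^d` in `ℤ^d`. -/
noncomputable def centredBox (d : ℕ) (n : ℕ) : Finset (Fin d → ℤ) :=
  Fintype.piFinset fun _ => Finset.Icc (-(n : ℤ)) (n : ℤ)

/-- The cylinder set `[η_{Λ_n}]` determined by a configuration `σ` on `Λ_n`. -/
def cylinder (d q n : ℕ) (σ : ↥(centredBox d n) → Fin q) :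
    Set ((Fin d → ℤ) → Fin q) :=
  {ω | ∀ z : ↥(centredBox d n), ω z.1 = σ z}

/-- `Γ_n(x, j, η) = ∫_{[η_{Λ_n}]} c_x(ω, j) dν(ω)`. -/
noncomputable def Gamma (d q : ℕ) (ν : Measure ((Fin d → ℤ) → Fin q))
    (c : (Fin d → ℤ) → Fin q → ((Fin d → ℤ) → Fin q) → ℝ) (n : ℕ)
    (x : Fin d → ℤ) (j : Fin q)
    (σ : ↥(centredBox d n) → Fin q) : ℝ :=
  ∫ ω in cylinder d q n σ, c x j ω ∂ν

/-- The kernel `Φ(u,v) = (u − v)(log u − log v)`. -/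
noncomputable def Phi (u v : ℝ) : ℝ := (u - v) * (Real.log u - Real.log v)

/-- `α_n(x) = Σ_{η_{Λ_n}} Σ_{i ≠ η_x} Φ(Γ_n(x, η_x, η^{x,i}), Γ_n(x, i, η))`. -/
noncomputable def alpha (d q : ℕ) (ν : Measure ((Fin d → ℤ) → Fin q))
    (c : (Fin d → ℤ) → Fin q → ((Fin d → ℤ) → Fin q) → ℝ) (n : ℕ)
    (x : Fin d → ℤ) : ℝ :=
  if hx : x ∈ centredBox d n then
    ∑ σ : ↥(centredBox d n) → Fin q,
      ∑ i ∈ Finset.univ.filter fun i : Fin q => i ≠ σ ⟨x, hx⟩,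
        Phi (Gamma d q ν c n x (σ ⟨x, hx⟩) (Function.update σ ⟨x, hx⟩ i))
          (Gamma d q ν c n x i σ)
  else 0

/-! Refining the box from `Λ_m` to `Λ_n ⊇ Λ_m` splits each cylinder into the cylinders of the
configurations on `Λ_n` extending it, so `Γ_m(x, j, σ) = ∑_{τ ⊇ σ} Γ_n(x, j, τ)`; the same holds
for `σ^{x,i}`, whose extensions are the `τ^{x,i}`. Since `Φ(u, v) = u log(u/v) + v log(v/u)` is a
sum of two terms that are subadditive by the log-sum inequality, `Φ` of these sums is at most the
sum of the `Φ`'s, and regrouping the configurations on `Λ_n` by their restriction to `Λ_m` gives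
`α_m(x) ≤ α_n(x)`. Nonnegativity holds because `Φ ≥ 0` and `Γ ≥ δ ν(cylinder) > 0`. -/

open Finset Function

lemma Phi_nonneg {u v : ℝ} (hu : 0 < u) (hv : 0 < v) : 0 ≤ Phi u v := by
  rcases le_total v u with h | h
  · exact mul_nonneg (sub_nonneg.2 h) (sub_nonneg.2 (Real.log_le_log hv h))
  · exact mul_nonneg_of_nonpos_of_nonpos (sub_nonpos.2 h)
      (sub_nonpos.2 (Real.log_le_log hu h))

lemma Phi_eq_add {u v : ℝ} (hu : 0 < u) (hv : 0 < v) :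
    Phi u v = u * Real.log (u / v) + v * Real.log (v / u) := by
  rw [Phi, Real.log_div hu.ne' hv.ne', Real.log_div hv.ne' hu.ne']
  ring

theorem Real.sum_mul_log_div_sum_le {ι : Type*} {s : Finset ι} {u v : ι → ℝ}
    (hu : ∀ i ∈ s, 0 < u i) (hv : ∀ i ∈ s, 0 < v i) :
    (∑ i ∈ s, u i) * Real.log ((∑ i ∈ s, u i) / ∑ i ∈ s, v i) ≤
      ∑ i ∈ s, u i * Real.log (u i / v i) := by
  rcases s.eq_empty_or_nonempty with rfl | hs
  · simp
  set U := ∑ i ∈ s, u i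
  set V := ∑ i ∈ s, v i
  have hU : 0 < U := sum_pos hu hs
  have hV : 0 < V := sum_pos hv hs
  have hterm : ∀ i ∈ s, u i * Real.log (U / V) + (u i - U / V * v i) ≤
      u i * Real.log (u i / v i) := by
    intro i hi
    have hui := hu i hi
    have hvi := hv i hi
    have hlog := Real.log_le_sub_one_of_pos (x := U / V * v i / u i) (by positivity)
    rw [Real.log_div (by positivity) hui.ne', Real.log_mul (by positivity) hvi.ne'] at hlog
    rw [Real.log_div hui.ne' hvi.ne']
    have := mul_le_mul_of_nonneg_left hlog hui.le
    have e : u i * (U / V * v i / u i - 1) = U / V * v i - u i := by field_simp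
    linarith
  calc U * Real.log (U / V)
      = ∑ i ∈ s, (u i * Real.log (U / V) + (u i - U / V * v i)) := by
        rw [sum_add_distrib, sum_sub_distrib, ← sum_mul, ← mul_sum, div_mul_cancel₀ _ hV.ne']
        ring
    _ ≤ _ := sum_le_sum hterm

theorem Phi_sum_le_s9 {ι : Type*} {s : Finset ι} {u v : ι → ℝ}
    (hu : ∀ i ∈ s, 0 < u i) (hv : ∀ i ∈ s, 0 < v i) :
    Phi (∑ i ∈ s, u i) (∑ i ∈ s, v i) ≤ ∑ i ∈ s, Phi (u i) (v i) := by
  rcases s.eq_empty_or_nonempty with rfl | hs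
  · simp [Phi]
  rw [Phi_eq_add (sum_pos hu hs) (sum_pos hv hs),
    sum_congr rfl fun i hi => Phi_eq_add (hu i hi) (hv i hi), sum_add_distrib]
  exact add_le_add (Real.sum_mul_log_div_sum_le hu hv) (Real.sum_mul_log_div_sum_le hv hu)

theorem MeasureTheory.setIntegral_preimage_comp_eq_sum {Ω β γ E : Type*} [MeasurableSpace Ω]
    [MeasurableSpace β] [MeasurableSingletonClass β] [Fintype β] [DecidableEq γ]
    [NormedAddCommGroup E] [NormedSpace ℝ E] {μ : Measure Ω} {f : Ω → β} (hf : Measurable f)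
    (r : β → γ) (c : γ) {F : Ω → E} (hF : IntegrableOn F ((r ∘ f) ⁻¹' {c}) μ) :
    ∫ ω in (r ∘ f) ⁻¹' {c}, F ω ∂μ = ∑ b with r b = c, ∫ ω in f ⁻¹' {b}, F ω ∂μ := by
  have hunion : (r ∘ f) ⁻¹' {c} = ⋃ b ∈ ({b | r b = c} : Finset β), f ⁻¹' {b} := by
    ext; simp
  rw [hunion] at hF ⊢
  exact integral_biUnion_finset _ (fun b _ => hf (measurableSet_singleton b))
    ((Set.pairwiseDisjoint_fiber f _).subset (Set.subset_univ _))
    (fun b hb => hF.mono_set (Set.subset_biUnion_of_mem (u := fun b => f ⁻¹' {b}) hb))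

section Restriction

variable {ι α : Type*} [DecidableEq ι] {S T : Finset ι}

lemma Finset.restrict₂_update (h : S ⊆ T) (τ : T → α) {x : ι} (hx : x ∈ S) (a : α) :
    restrict₂ (π := fun _ => α) h (update τ ⟨x, h hx⟩ a) =
      update (restrict₂ (π := fun _ => α) h τ) ⟨x, hx⟩ a := by
  funext z
  simp only [restrict₂, update_apply, Subtype.ext_iff]

lemma Finset.sum_restrict₂_eq_update {M : Type*} [AddCommMonoid M] [Fintype α] [DecidableEq α]
    (h : S ⊆ T) {x : ι} (hx : x ∈ S) (σ : S → α) (a : α) (f : (T → α) → M) :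
    ∑ τ with restrict₂ (π := fun _ => α) h τ = update σ ⟨x, hx⟩ a, f τ =
      ∑ τ with restrict₂ (π := fun _ => α) h τ = σ, f (update τ ⟨x, h hx⟩ a) := by
  have hrestr : ∀ τ : T → α, τ ⟨x, h hx⟩ = restrict₂ (π := fun _ => α) h τ ⟨x, hx⟩ :=
    fun _ => rfl
  symm
  refine sum_nbij' (update · ⟨x, h hx⟩ a) (update · ⟨x, h hx⟩ (σ ⟨x, hx⟩)) ?_ ?_ ?_ ?_
    fun _ _ => rfl
  · intro τ hτ
    simp only [mem_filter, mem_univ, true_and] at hτ ⊢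
    rw [restrict₂_update, hτ]
  · intro τ hτ
    simp only [mem_filter, mem_univ, true_and] at hτ ⊢
    rw [restrict₂_update h τ hx, hτ, update_idem, update_eq_self]
  · intro τ hτ
    simp only [mem_filter, mem_univ, true_and] at hτ
    have hτx : τ ⟨x, h hx⟩ = σ ⟨x, hx⟩ := by rw [hrestr τ, hτ]
    rw [update_idem, ← hτx, update_eq_self]
  · intro τ hτ
    simp only [mem_filter, mem_univ, true_and] at hτ
    have hτx : τ ⟨x, h hx⟩ = a := by rw [hrestr τ, hτ, update_self]
    rw [update_idem, ← hτx, update_eq_self]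

end Restriction

lemma centredBox_mono (d : ℕ) : Monotone (centredBox d) := fun _ _ hmn =>
  Fintype.piFinset_subset _ _ fun _ => Icc_subset_Icc (by simpa using hmn) (by simpa using hmn)

lemma cylinder_eq_preimage_restrict (d q n : ℕ) (σ : ↥(centredBox d n) → Fin q) :
    cylinder d q n σ = (centredBox d n).restrict (π := fun _ => Fin q) ⁻¹' {σ} := by
  ext ω
  simp [_root_.cylinder, funext_iff]

section Gamma

variable {d q : ℕ} {ν : Measure ((Fin d → ℤ) → Fin q)}
  {c : (Fin d → ℤ) → Fin q → ((Fin d → ℤ) → Fin q) → ℝ} {x : Fin d → ℤ} {j : Fin q}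

lemma Gamma_eq_sum_Gamma {m n : ℕ} (hmn : m ≤ n) (hint : Integrable (c x j) ν)
    (σ : ↥(centredBox d m) → Fin q) :
    Gamma d q ν c m x j σ =
      ∑ τ with restrict₂ (π := fun _ => Fin q) (centredBox_mono d hmn) τ = σ,
        Gamma d q ν c n x j τ := by
  simp only [Gamma, cylinder_eq_preimage_restrict,
    ← restrict₂_comp_restrict (π := fun _ => Fin q) (centredBox_mono d hmn)]
  exact setIntegral_preimage_comp_eq_sum (measurable_restrict (X := fun _ => Fin q) _) _ _
    hint.integrableOn

lemma Gamma_pos [IsFiniteMeasure ν] {n : ℕ} (hν : ∀ σ, 0 < ν (cylinder d q n σ))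
    (hint : Integrable (c x j) ν) {δ : ℝ} (hδ : 0 < δ) (hc : ∀ ω, δ ≤ c x j ω)
    (σ : ↥(centredBox d n) → Fin q) : 0 < Gamma d q ν c n x j σ := by
  have hmeas : MeasurableSet (cylinder d q n σ) := by
    rw [cylinder_eq_preimage_restrict]
    exact measurable_restrict _ (measurableSet_singleton σ)
  calc 0 < δ * ν.real (cylinder d q n σ) :=
        mul_pos hδ (ENNReal.toReal_pos (hν σ).ne' (measure_ne_top ν _))
    _ ≤ Gamma d q ν c n x j σ :=
        setIntegral_ge_of_const_le_real hmeas (measure_ne_top ν _) (fun ω _ => hc ω)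
          hint.integrableOn

end Gamma

section Alpha

variable {d q : ℕ} {ν : Measure ((Fin d → ℤ) → Fin q)}
  {c : (Fin d → ℤ) → Fin q → ((Fin d → ℤ) → Fin q) → ℝ} {x : Fin d → ℤ}

lemma alpha_nonneg {n : ℕ} (hpos : ∀ j σ, 0 < Gamma d q ν c n x j σ) :
    0 ≤ alpha d q ν c n x := by
  unfold alpha
  split_ifs
  · exact sum_nonneg fun σ _ => sum_nonneg fun i _ => Phi_nonneg (hpos _ _) (hpos _ _)
  · exact le_rfl

lemma alpha_le_alpha_of_le {m n : ℕ} (hmn : m ≤ n) (hx : x ∈ centredBox d m)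
    (hint : ∀ j, Integrable (c x j) ν) (hpos : ∀ j τ, 0 < Gamma d q ν c n x j τ) :
    alpha d q ν c m x ≤ alpha d q ν c n x := by
  have h := centredBox_mono d hmn
  rw [alpha, alpha, dif_pos hx, dif_pos (h hx),
    ← sum_fiberwise univ (restrict₂ (π := fun _ => Fin q) h)]
  refine sum_le_sum fun σ _ => ?_
  calc ∑ i with i ≠ σ ⟨x, hx⟩,
        Phi (Gamma d q ν c m x (σ ⟨x, hx⟩) (update σ ⟨x, hx⟩ i)) (Gamma d q ν c m x i σ)
      ≤ ∑ i with i ≠ σ ⟨x, hx⟩, ∑ τ with restrict₂ (π := fun _ => Fin q) h τ = σ,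
          Phi (Gamma d q ν c n x (σ ⟨x, hx⟩) (update τ ⟨x, h hx⟩ i))
            (Gamma d q ν c n x i τ) := by
        refine sum_le_sum fun i _ => ?_
        rw [Gamma_eq_sum_Gamma hmn (hint _), Gamma_eq_sum_Gamma hmn (hint _),
          sum_restrict₂_eq_update]
        exact Phi_sum_le_s9 (fun _ _ => hpos _ _) (fun _ _ => hpos _ _)
    _ = ∑ τ with restrict₂ (π := fun _ => Fin q) h τ = σ, ∑ i with i ≠ τ ⟨x, h hx⟩,
          Phi (Gamma d q ν c n x (τ ⟨x, h hx⟩) (update τ ⟨x, h hx⟩ i))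
            (Gamma d q ν c n x i τ) := by
        rw [sum_comm]
        refine sum_congr rfl fun τ hτ => ?_
        have hτx : τ ⟨x, h hx⟩ = σ ⟨x, hx⟩ := congrFun (mem_filter.1 hτ).2 ⟨x, hx⟩
        rw [hτx]

end Alpha

theorem alpha_nonneg_mono_general (d q : ℕ)
    (ν : Measure ((Fin d → ℤ) → Fin q)) [IsProbabilityMeasure ν]
    (hν : ∀ (n : ℕ) (σ : ↥(centredBox d n) → Fin q),
      0 < ν (cylinder d q n σ))
    (c : (Fin d → ℤ) → Fin q → ((Fin d → ℤ) → Fin q) → ℝ)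
    (hc_meas : ∀ x j, Measurable (c x j))
    (hc_bdd : ∀ x, ∃ M : ℝ, ∀ j ω, c x j ω ≤ M)
    (δ : ℝ) (hδ : 0 < δ) (hc_lb : ∀ x j ω, δ ≤ c x j ω)
    (n : ℕ) (x : Fin d → ℤ) (hx : x ∈ centredBox d n) :
    0 ≤ alpha d q ν c n x ∧ alpha d q ν c n x ≤ alpha d q ν c (n + 1) x := by
  have hint : ∀ j, Integrable (c x j) ν := fun j => by
    obtain ⟨M, hM⟩ := hc_bdd x
    refine Integrable.of_bound (hc_meas x j).aestronglyMeasurable M (ae_of_all _ fun ω => ?_)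
    exact abs_le.2 ⟨by linarith [hc_lb x j ω, hM j ω], hM j ω⟩
  have hpos : ∀ m j σ, 0 < Gamma d q ν c m x j σ :=
    fun m j σ => Gamma_pos (hν m) (hint j) hδ (hc_lb x j) σ
  exact ⟨alpha_nonneg (hpos n), alpha_le_alpha_of_le n.le_succ hx hint (hpos (n + 1))⟩

/-- Monotonicity of `α_n(x)` in the volume: `0 ≤ α_n(x) ≤ α_{n+1}(x)`. -/
theorem alpha_nonneg_mono (d q : ℕ) (hd : 1 ≤ d) (hq : 2 ≤ q)
    (ν : Measure ((Fin d → ℤ) → Fin q)) [IsProbabilityMeasure ν]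
    (hν : ∀ (n : ℕ) (σ : ↥(centredBox d n) → Fin q),
      0 < ν (cylinder d q n σ))
    (c : (Fin d → ℤ) → Fin q → ((Fin d → ℤ) → Fin q) → ℝ)
    (hc_meas : ∀ x j, Measurable (c x j))
    (hc_bdd : ∀ x, ∃ M : ℝ, ∀ j ω, c x j ω ≤ M)
    (δ : ℝ) (hδ : 0 < δ) (hc_lb : ∀ x j ω, δ ≤ c x j ω)
    (n : ℕ) (hn : 1 ≤ n) (x : Fin d → ℤ) (hx : x ∈ centredBox d n) :
    0 ≤ alpha d q ν c n x ∧ alpha d q ν c n x ≤ alpha d q ν c (n + 1) x :=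
  alpha_nonneg_mono_general d q ν hν c hc_meas hc_bdd δ hδ hc_lb n x hx
end

section
/- Let q ≥ 2, let Λ be a finite set, let E = Λ → {1,…,q} be the finite configuration space over Λ, and let ν, μ : E → ℝ be strictly positive functions. For each x ∈ Λ, each j ∈ {1,…,q} and each η ∈ E, let Γ(x, j, η) > 0 be given, and write A(η,x,i) = Γ(x, η_x, η^{x,i}) and B(η,x,i) = Γ(x, i, η). Then the following algebraic identity holds: 2 Σ_{η ∈ E} Σ_{x ∈ Λ} Σ_{i ≠ η_x} [A − B] log( ν(η)/μ(η) ) = − Σ_{η ∈ E} Σ_{x ∈ Λ} Σ_{i ≠ η_x} [A − B] log( A/B ) + Σ_{η ∈ E} Σ_{x ∈ Λ} Σ_{i ≠ η_x} [A − B] { log( ν(η)/B ) − log( ν(η^{x,i})/A ) − log( μ(η)/μ(η^{x,i}) ) }. -/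
lemma invol_sum {q : ℕ} {Λ : Type*} [Fintype Λ] [DecidableEq Λ] (x : Λ)
    (F : (Λ → Fin q) → Fin q → ℝ) :
    ∑ η : Λ → Fin q, ∑ i ∈ Finset.univ.filter (fun i => i ≠ η x), F η i
    = ∑ η : Λ → Fin q, ∑ i ∈ Finset.univ.filter (fun i => i ≠ η x),
        F (Function.update η x i) (η x) := by
  rw [Finset.sum_sigma', Finset.sum_sigma']
  refine Finset.sum_nbij' (fun p => ⟨Function.update p.1 x p.2, p.1 x⟩)
    (fun p => ⟨Function.update p.1 x p.2, p.1 x⟩) ?_ ?_ ?_ ?_ ?_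
  · rintro ⟨η, i⟩ hp
    simp only [Finset.mem_sigma, Finset.mem_filter, Finset.mem_univ, true_and] at hp ⊢
    simp [Ne, eq_comm, hp]
  · rintro ⟨η, i⟩ hp
    simp only [Finset.mem_sigma, Finset.mem_filter, Finset.mem_univ, true_and] at hp ⊢
    simp [Ne, eq_comm, hp]
  · rintro ⟨η, i⟩ hp
    simp only [Finset.mem_sigma, Finset.mem_filter, Finset.mem_univ, true_and] at hp
    simp [Function.update_idem]
  · rintro ⟨η, i⟩ hp
    simp only [Finset.mem_sigma, Finset.mem_filter, Finset.mem_univ, true_and] at hp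
    simp [Function.update_idem]
  · rintro ⟨η, i⟩ hp
    simp

/-- The algebraic identity behind the representation of twice the finite-volume
relative entropy loss of an interacting particle system with single-site rates.
Here `Function.update η x i` plays the role of `η^{x,i}`, and
`Γ x j η` plays the role of `∫_{[η_Λ]} c_x(ω,j) dν(ω)`. -/
theorem entropy_loss_identity (q : ℕ) (hq : 2 ≤ q)
    {Λ : Type*} [Fintype Λ] [DecidableEq Λ]
    (ν μ : (Λ → Fin q) → ℝ) (hν : ∀ η, 0 < ν η) (hμ : ∀ η, 0 < μ η)
    (Γ : Λ → Fin q → (Λ → Fin q) → ℝ) (hΓ : ∀ x j η, 0 < Γ x j η) :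
    2 * ∑ η : Λ → Fin q, ∑ x : Λ, ∑ i ∈ Finset.univ.filter fun i => i ≠ η x,
        (Γ x (η x) (Function.update η x i) - Γ x i η) * Real.log (ν η / μ η)
    =
    - (∑ η : Λ → Fin q, ∑ x : Λ, ∑ i ∈ Finset.univ.filter fun i => i ≠ η x,
        (Γ x (η x) (Function.update η x i) - Γ x i η) *
          Real.log (Γ x (η x) (Function.update η x i) / Γ x i η))
    + ∑ η : Λ → Fin q, ∑ x : Λ, ∑ i ∈ Finset.univ.filter fun i => i ≠ η x,
        (Γ x (η x) (Function.update η x i) - Γ x i η) *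
          (Real.log (ν η / Γ x i η)
            - Real.log (ν (Function.update η x i) / Γ x (η x) (Function.update η x i))
            - Real.log (μ η / μ (Function.update η x i))) := by
  classical
  set S1 := ∑ η : Λ → Fin q, ∑ x : Λ, ∑ i ∈ Finset.univ.filter fun i => i ≠ η x,
      (Γ x (η x) (Function.update η x i) - Γ x i η) * Real.log (ν η / μ η) with hS1
  set S2 := ∑ η : Λ → Fin q, ∑ x : Λ, ∑ i ∈ Finset.univ.filter fun i => i ≠ η x,
      (Γ x (η x) (Function.update η x i) - Γ x i η) *
        Real.log (ν (Function.update η x i) / μ (Function.update η x i)) with hS2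
  -- the involution step: S2 = -S1
  have h2 : S2 = -S1 := by
    rw [hS1, hS2, Finset.sum_comm, Finset.sum_comm (f := fun η x =>
      ∑ i ∈ Finset.univ.filter fun i => i ≠ η x,
        (Γ x (η x) (Function.update η x i) - Γ x i η) * Real.log (ν η / μ η))]
    rw [← Finset.sum_neg_distrib]
    refine Finset.sum_congr rfl fun x _ => ?_
    rw [invol_sum x (fun η i => (Γ x (η x) (Function.update η x i) - Γ x i η) *
      Real.log (ν (Function.update η x i) / μ (Function.update η x i)))]
    rw [← Finset.sum_neg_distrib]
    refine Finset.sum_congr rfl fun η _ => ?_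
    rw [← Finset.sum_neg_distrib]
    refine Finset.sum_congr rfl fun i hi => ?_
    simp only [Function.update_idem, Function.update_self, Function.update_eq_self]
    ring
  -- the RHS equals S1 - S2 by log algebra
  have hRHS :
      - (∑ η : Λ → Fin q, ∑ x : Λ, ∑ i ∈ Finset.univ.filter fun i => i ≠ η x,
          (Γ x (η x) (Function.update η x i) - Γ x i η) *
            Real.log (Γ x (η x) (Function.update η x i) / Γ x i η))
      + ∑ η : Λ → Fin q, ∑ x : Λ, ∑ i ∈ Finset.univ.filter fun i => i ≠ η x,
          (Γ x (η x) (Function.update η x i) - Γ x i η) *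
            (Real.log (ν η / Γ x i η)
              - Real.log (ν (Function.update η x i) / Γ x (η x) (Function.update η x i))
              - Real.log (μ η / μ (Function.update η x i)))
      = S1 - S2 := by
    rw [neg_add_eq_sub, hS1, hS2]
    simp only [← Finset.sum_sub_distrib]
    refine Finset.sum_congr rfl fun η _ => Finset.sum_congr rfl fun x _ =>
      Finset.sum_congr rfl fun i _ => ?_
    rw [Real.log_div (hν η).ne' (hΓ x i η).ne',
      Real.log_div (hν _).ne' (hΓ x (η x) _).ne',
      Real.log_div (hμ η).ne' (hμ _).ne',
      Real.log_div (hΓ x (η x) _).ne' (hΓ x i η).ne',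
      Real.log_div (hν η).ne' (hμ η).ne',
      Real.log_div (hν _).ne' (hμ _).ne']
    ring
  rw [hRHS, h2]
  ring
end

section
/- Let δ : ℕ → ℝ be a sequence with δ_n ≥ 0 for all n ≥ 1, and suppose there is a constant C > 0 such that ( Σ_{k=1}^{n} δ_k )² ≤ C · n · δ_n for all n ≥ 1. Then δ_n = 0 for all n ≥ 1. -/
/-!
If `δ n₀ > 0`, the partial sums `S n = ∑_{k ≤ n} δ k` are positive and nondecreasing from `n₀` on,
and the hypothesis at `n + 1` turns into `(C (n + 1))⁻¹ ≤ (S n)⁻¹ - (S (n + 1))⁻¹`.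
Telescoping bounds the tail `∑_{n ≥ n₀} (n + 1)⁻¹` of the harmonic series by `C / S n₀`,
contradicting its divergence.
-/

open Finset

theorem exists_sub_succ_lt_inv_mul {u : ℕ → ℝ} (hu : ∀ n, 0 ≤ u n) {C : ℝ} (hC : 0 < C)
    (N : ℕ) : ∃ n ≥ N, u n - u (n + 1) < (C * (n + 1))⁻¹ := by
  by_contra! hdecr
  have hpartial : ∀ m, ∑ i ∈ range m, (C * ((i + (N + 1) : ℕ) : ℝ))⁻¹ ≤ u N := fun m =>
    calc ∑ i ∈ range m, (C * ((i + (N + 1) : ℕ) : ℝ))⁻¹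
        ≤ ∑ i ∈ range m, (u (N + i) - u (N + i + 1)) :=
          sum_le_sum fun i _ => by
            simpa [add_comm, add_left_comm, add_assoc] using hdecr (N + i) (Nat.le_add_right N i)
      _ = u N - u (N + m) := sum_range_sub' (fun i => u (N + i)) m
      _ ≤ u N := sub_le_self _ (hu _)
  have hsummable : Summable fun n : ℕ => C⁻¹ * (n : ℝ)⁻¹ := by
    refine (summable_nat_add_iff (N + 1)).mp (summable_of_sum_range_le (c := u N) (fun i => ?_) ?_)
    · positivity
    · simpa only [mul_inv] using hpartial
  exact Real.not_summable_natCast_inv ((summable_mul_left_iff (inv_ne_zero hC.ne')).mp hsummable)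

theorem inv_le_inv_sub_inv_of_sq_le_mul_sub {a b K : ℝ} (ha : 0 < a) (hab : a ≤ b)
    (h : b ^ 2 ≤ K * (b - a)) : K⁻¹ ≤ a⁻¹ - b⁻¹ := by
  have hb : 0 < b := ha.trans_le hab
  have hK : 0 < K := pos_of_mul_pos_left ((pow_pos hb 2).trans_le h) (sub_nonneg.2 hab)
  rw [inv_sub_inv ha.ne' hb.ne', le_div_iff₀ (mul_pos ha hb), inv_mul_le_iff₀ hK]
  nlinarith

theorem harmonic_divergence_argument_general (δ : ℕ → ℝ)
    (C : ℝ) (hC : 0 < C)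
    (h : ∀ n, 1 ≤ n → (∑ k ∈ Finset.Icc 1 n, δ k) ^ 2 ≤ C * n * δ n) :
    ∀ n, 1 ≤ n → δ n = 0 := by
  intro n₀ hn₀
  set S : ℕ → ℝ := fun n => ∑ k ∈ Icc 1 n, δ k
  have hδ : ∀ n, 1 ≤ n → 0 ≤ δ n := fun n hn =>
    nonneg_of_mul_nonneg_right ((sq_nonneg _).trans (h n hn)) (by positivity)
  have hS_nonneg : ∀ n, 0 ≤ S n := fun n =>
    sum_nonneg fun k hk => hδ k (mem_Icc.1 hk).1
  have hS_mono : Monotone S := fun m n hmn =>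
    sum_le_sum_of_subset_of_nonneg (Icc_subset_Icc_right hmn) fun k hk _ => hδ k (mem_Icc.1 hk).1
  by_contra hne
  have hS_pos : 0 < S n₀ := ((hδ n₀ hn₀).lt_of_ne' hne).trans_le <|
    single_le_sum (fun k hk => hδ k (mem_Icc.1 hk).1) (mem_Icc.2 ⟨hn₀, le_rfl⟩)
  obtain ⟨n, hn, hlt⟩ := exists_sub_succ_lt_inv_mul (fun n => inv_nonneg.2 (hS_nonneg n)) hC n₀
  have hδ_succ : δ (n + 1) = S (n + 1) - S n :=
    eq_sub_of_add_eq' (sum_Icc_succ_top (by omega) δ).symm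
  have hsq : S (n + 1) ^ 2 ≤ C * (n + 1) * (S (n + 1) - S n) := by
    have := h (n + 1) (by omega)
    push_cast at this
    rwa [hδ_succ] at this
  exact hlt.not_ge (inv_le_inv_sub_inv_of_sq_le_mul_sub
    (hS_pos.trans_le (hS_mono hn)) (hS_mono n.le_succ) hsq)

/-- If `δ_n ≥ 0` and `(Σ_{k=1}^n δ_k)² ≤ C n δ_n` for all `n ≥ 1` with some
constant `C > 0`, then `δ_n = 0` for all `n ≥ 1`. -/
theorem harmonic_divergence_argument (δ : ℕ → ℝ) (hδ : ∀ n, 1 ≤ n → 0 ≤ δ n)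
    (C : ℝ) (hC : 0 < C)
    (h : ∀ n, 1 ≤ n → (∑ k ∈ Finset.Icc 1 n, δ k) ^ 2 ≤ C * n * δ n) :
    ∀ n, 1 ≤ n → δ n = 0 :=
  harmonic_divergence_argument_general δ C hC h
end
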